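/- Let B₂ ∈ ℝ^{n₁×n₂}, V = [I;-I] ∈ ℝ^{2n₁×n₁}, B̂₂ = VB₂ = [B₂; -B₂], and Âᵤ = B̂₂⁺(B̂₂⁻)^T + B̂₂⁻(B̂₂⁺)^T. Then V^T Âᵤ = -B₂B₂^T V^T, i.e., Âᵤ is a lifting of -B₂B₂^T. -/

import Mathlib

/-!
Since `V B₂ = [B₂; -B₂]` and `(-x)⁺ = x⁻`, the positive and negative parts of `B̂₂` are the
block columns `[P; N]` and `[N; P]`, where `P - N = B₂`. Left multiplication by `Vᵀ` subtracts the
lower block row from the upper one, so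
`Vᵀ Âᵤ = B₂ [N; P]ᵀ - B₂ [P; N]ᵀ = B₂ [-B₂; B₂]ᵀ = -B₂ (V B₂)ᵀ = -B₂ B₂ᵀ Vᵀ`.
-/

open Matrix

/-- The lifting matrix `V = [I; -I]`. -/
noncomputable def liftV (n : ℕ) : Matrix (Fin n ⊕ Fin n) (Fin n) ℝ :=
  Matrix.of fun i j =>
    match i with
    | Sum.inl a => if a = j then (1 : ℝ) else 0
    | Sum.inr a => if a = j then (-1 : ℝ) else 0

/-- Entrywise positive part. -/
def matPos {m k : Type*} (M : Matrix m k ℝ) : Matrix m k ℝ :=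
  Matrix.of fun i j => max (M i j) 0

/-- Entrywise negative part. -/
def matNeg {m k : Type*} (M : Matrix m k ℝ) : Matrix m k ℝ :=
  Matrix.of fun i j => max (-M i j) 0

section
variable {m m' k : Type*}

lemma matPos_sub_matNeg (M : Matrix m k ℝ) : matPos M - matNeg M = M := by
  ext i j
  exact posPart_sub_negPart (M i j)

lemma matPos_neg (M : Matrix m k ℝ) : matPos (-M) = matNeg M := by
  ext i j
  exact posPart_neg (M i j)

lemma matNeg_neg (M : Matrix m k ℝ) : matNeg (-M) = matPos M := by
  ext i j
  exact negPart_neg (M i j)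

lemma matPos_fromRows (A : Matrix m k ℝ) (B : Matrix m' k ℝ) :
    matPos (fromRows A B) = fromRows (matPos A) (matPos B) :=
  fromRows_map A B (·⁺)

lemma matNeg_fromRows (A : Matrix m k ℝ) (B : Matrix m' k ℝ) :
    matNeg (fromRows A B) = fromRows (matNeg A) (matNeg B) :=
  fromRows_map A B (·⁻)

lemma fromRows_sub_fromRows {R : Type*} [Sub R] (A C : Matrix m k R) (B D : Matrix m' k R) :
    fromRows A B - fromRows C D = fromRows (A - C) (B - D) := by
  ext (i | i) j <;> rfl
end

lemma liftV_eq_fromRows (n : ℕ) : liftV n = fromRows 1 (-1) := by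
  ext (a | a) j <;> simp [liftV, one_apply, apply_ite]

lemma liftV_mul {k : Type*} (n : ℕ) (B : Matrix (Fin n) k ℝ) :
    liftV n * B = fromRows B (-B) := by
  simp [liftV_eq_fromRows]

lemma liftV_transpose_mul_fromRows {k : Type*} (n : ℕ) (X Y : Matrix (Fin n) k ℝ) :
    (liftV n)ᵀ * fromRows X Y = X - Y := by
  simp [liftV_eq_fromRows, transpose_fromRows, fromCols_mul_fromRows, sub_eq_add_neg]

/-- With `B̂₂ = VB₂` and `Âᵤ = B̂₂⁺(B̂₂⁻)ᵀ + B̂₂⁻(B̂₂⁺)ᵀ`, the matrix `Âᵤ` is a lifting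
of `-B₂B₂ᵀ`, i.e. `Vᵀ Âᵤ = -B₂B₂ᵀ Vᵀ`. -/
theorem stmt_5 (n₁ n₂ : ℕ) (B₂ : Matrix (Fin n₁) (Fin n₂) ℝ) :
    (liftV n₁)ᵀ *
      (matPos (liftV n₁ * B₂) * (matNeg (liftV n₁ * B₂))ᵀ +
       matNeg (liftV n₁ * B₂) * (matPos (liftV n₁ * B₂))ᵀ) =
    (-(B₂ * B₂ᵀ)) * (liftV n₁)ᵀ := by
  rw [liftV_mul, matPos_fromRows, matNeg_fromRows, matPos_neg, matNeg_neg]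
  set P := matPos B₂
  set N := matNeg B₂
  calc (liftV n₁)ᵀ * (fromRows P N * (fromRows N P)ᵀ + fromRows N P * (fromRows P N)ᵀ)
      = B₂ * (fromRows N P)ᵀ - B₂ * (fromRows P N)ᵀ := by
        rw [Matrix.mul_add, ← Matrix.mul_assoc, ← Matrix.mul_assoc, liftV_transpose_mul_fromRows,
          liftV_transpose_mul_fromRows, matPos_sub_matNeg, ← neg_sub, matPos_sub_matNeg,
          Matrix.neg_mul, sub_eq_add_neg]
    _ = B₂ * (fromRows (-B₂) B₂)ᵀ := by
        rw [← Matrix.mul_sub, ← transpose_sub, fromRows_sub_fromRows, ← neg_sub, matPos_sub_matNeg]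
    _ = -(B₂ * B₂ᵀ) * (liftV n₁)ᵀ := by
        rw [Matrix.neg_mul, Matrix.mul_assoc, ← transpose_mul, liftV_mul,
          ← Matrix.mul_neg, ← transpose_neg, fromRows_neg, neg_neg]
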